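/- Let U ⊆ ℂ be open, let a, b, c, d ∈ ℂ with a·d − b·c = 1 and â, b̂, ĉ, d̂ ∈ ℂ with â·d̂ − b̂·ĉ = 1, and set γ(z) = (a·z+b)/(c·z+d), ρ(w) = (â·w+b̂)/(ĉ·w+d̂). Let f, g, h : ℂ → ℂ be analytic on U such that for all z ∈ U with c·z+d ≠ 0: γ(z) ∈ U, ĉ·f(z)+d̂ ≠ 0 and f(γ(z)) = ρ(f(z)), g(γ(z)) = g(z), and h(γ(z)) = h(z). Define ḟ(z) = f'(z)/g'(z), f̈(z) = (ḟ)'(z)/g'(z), and F(z) = f(z) + ḟ(z)/(h(z) − f̈(z)/(2·ḟ(z))). Then for every z ∈ U such that c·z+d ≠ 0, g'(z) ≠ 0, g'(γ(z)) ≠ 0, ḟ ≠ 0 and h − f̈/(2ḟ) ≠ 0 at both z and γ(z), and ĉ·F(z)+d̂ ≠ 0, one has F(γ(z)) = (â·F(z)+b̂)/(ĉ·F(z)+d̂). -/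

import Mathlib

/-!
Write `J = ĉ f + d̂`. Differentiating the invariance of `g` and the equivariance of `f`
along `γ` gives `ḟ ∘ γ = ḟ / J²`, and differentiating once more
`f̈ ∘ γ = f̈ / J² - 2 ĉ ḟ² / J³`; hence the denominator `h - f̈ / (2 ḟ)` picks up exactly
`ĉ ḟ / J`. What remains is the Möbius identity
`ρ (w + p / D) = ρ w + (p / J²) / (D + ĉ p / J)`, the exact first-order expansion of `ρ`.
-/

open Filter Topology

section Derivatives

variable {𝕜 : Type*} [NontriviallyNormedField 𝕜]

theorem hasDerivAt_moebius (a b c d z : 𝕜) (hz : c * z + d ≠ 0) :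
    HasDerivAt (fun w => (a * w + b) / (c * w + d)) ((a * d - b * c) / (c * z + d) ^ 2) z := by
  have hnum : HasDerivAt (fun w => a * w + b) a z := by
    simpa using ((hasDerivAt_id z).const_mul a).add_const b
  have hden : HasDerivAt (fun w => c * w + d) c z := by
    simpa using ((hasDerivAt_id z).const_mul c).add_const d
  exact (hnum.div hden hz).congr_deriv (by ring)

variable {γ u v g f : 𝕜 → 𝕜} {z γ' : 𝕜}

theorem deriv_comp_mul_eq_of_eventuallyEq (hu : DifferentiableAt 𝕜 u (γ z))
    (hγ : HasDerivAt γ γ' z) (huv : u ∘ γ =ᶠ[𝓝 z] v) :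
    deriv u (γ z) * γ' = deriv v z := by
  rw [← huv.deriv_eq, (hu.hasDerivAt.comp z hγ).deriv]

theorem deriv_div_deriv_comp_of_eventuallyEq (hu : DifferentiableAt 𝕜 u (γ z))
    (hg : DifferentiableAt 𝕜 g (γ z)) (hγ : HasDerivAt γ γ' z) (hγ' : γ' ≠ 0)
    (huv : u ∘ γ =ᶠ[𝓝 z] v) (hgg : g ∘ γ =ᶠ[𝓝 z] g) :
    deriv u (γ z) / deriv g (γ z) = deriv v z / deriv g z := by
  rw [← deriv_comp_mul_eq_of_eventuallyEq hu hγ huv,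
    ← deriv_comp_mul_eq_of_eventuallyEq hg hγ hgg, mul_div_mul_right _ _ hγ']

variable {ah bh ch dh : 𝕜}

theorem deriv_div_deriv_comp_of_moebius_equivariant (hdet : ah * dh - bh * ch = 1)
    (hf : DifferentiableAt 𝕜 f z) (hfγ : DifferentiableAt 𝕜 f (γ z))
    (hg : DifferentiableAt 𝕜 g (γ z)) (hγ : HasDerivAt γ γ' z) (hγ' : γ' ≠ 0)
    (hJ : ch * f z + dh ≠ 0)
    (hfe : f ∘ γ =ᶠ[𝓝 z] fun w => (ah * f w + bh) / (ch * f w + dh))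
    (hgg : g ∘ γ =ᶠ[𝓝 z] g) :
    deriv f (γ z) / deriv g (γ z) = deriv f z / deriv g z / (ch * f z + dh) ^ 2 := by
  have hρf : HasDerivAt (fun w => (ah * f w + bh) / (ch * f w + dh))
      ((ah * dh - bh * ch) / (ch * f z + dh) ^ 2 * deriv f z) z :=
    (hasDerivAt_moebius ah bh ch dh (f z) hJ).comp z hf.hasDerivAt
  rw [deriv_div_deriv_comp_of_eventuallyEq hfγ hg hγ hγ' hfe hgg, hρf.deriv, hdet]
  ring

theorem deriv_div_deriv_comp_of_eventuallyEq_div_sq (hu : DifferentiableAt 𝕜 u z)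
    (huγ : DifferentiableAt 𝕜 u (γ z)) (hf : DifferentiableAt 𝕜 f z)
    (hg : DifferentiableAt 𝕜 g (γ z)) (hγ : HasDerivAt γ γ' z) (hγ' : γ' ≠ 0)
    (hJ : ch * f z + dh ≠ 0)
    (hue : u ∘ γ =ᶠ[𝓝 z] fun w => u w / (ch * f w + dh) ^ 2) (hgg : g ∘ γ =ᶠ[𝓝 z] g) :
    deriv u (γ z) / deriv g (γ z) =
      deriv u z / deriv g z / (ch * f z + dh) ^ 2
        - 2 * ch * u z * (deriv f z / deriv g z) / (ch * f z + dh) ^ 3 := by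
  have hJ2 : HasDerivAt (fun w => (ch * f w + dh) ^ 2)
      (2 * (ch * f z + dh) ^ 1 * (ch * deriv f z)) z :=
    ((hf.hasDerivAt.const_mul ch).add_const dh).pow 2
  have hquot : HasDerivAt (fun w => u w / (ch * f w + dh) ^ 2)
      ((deriv u z * (ch * f z + dh) ^ 2 - u z * (2 * (ch * f z + dh) ^ 1 * (ch * deriv f z)))
        / ((ch * f z + dh) ^ 2) ^ 2) z :=
    hu.hasDerivAt.div hJ2 (pow_ne_zero 2 hJ)
  rw [deriv_div_deriv_comp_of_eventuallyEq huγ hg hγ hγ' hue hgg, hquot.deriv]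
  field_simp

end Derivatives

theorem moebius_add_div {K : Type*} [Field K] {ah bh ch dh : K} (hdet : ah * dh - bh * ch = 1)
    {w p D : K} (hJ : ch * w + dh ≠ 0) (hD : D ≠ 0) (hJ' : ch * (w + p / D) + dh ≠ 0) :
    (ah * (w + p / D) + bh) / (ch * (w + p / D) + dh) =
      (ah * w + bh) / (ch * w + dh) + p / (ch * w + dh) ^ 2 / (D + ch * p / (ch * w + dh)) := by
  generalize hJdef : ch * w + dh = J at hJ ⊢
  obtain rfl : dh = J - ch * w := by rw [← hJdef]; ring
  have hS : D * J + p * ch ≠ 0 := by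
    contrapose! hJ'
    field_simp
    linear_combination hJ'
  rw [show ch * (w + p / D) + (J - ch * w) = (D * J + p * ch) / D by field_simp; ring]
  field_simp
  linear_combination p * hdet

theorem equivariant_of_invariant
    (U : Set ℂ) (hU : IsOpen U)
    (a b c d ah bh ch dh : ℂ)
    (hdet : a * d - b * c = 1) (hdet' : ah * dh - bh * ch = 1)
    (γ ρ : ℂ → ℂ)
    (hγ : γ = fun z => (a * z + b) / (c * z + d))
    (hρ : ρ = fun w => (ah * w + bh) / (ch * w + dh))
    (f g h : ℂ → ℂ)
    (hf : AnalyticOnNhd ℂ f U) (hg : AnalyticOnNhd ℂ g U)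
    (hmaps : ∀ z ∈ U, c * z + d ≠ 0 → γ z ∈ U)
    (hfden : ∀ z ∈ U, c * z + d ≠ 0 → ch * f z + dh ≠ 0)
    (hfe : ∀ z ∈ U, c * z + d ≠ 0 → f (γ z) = ρ (f z))
    (hgi : ∀ z ∈ U, c * z + d ≠ 0 → g (γ z) = g z)
    (hhi : ∀ z ∈ U, c * z + d ≠ 0 → h (γ z) = h z)
    (fd fdd F : ℂ → ℂ)
    (hfd : ∀ z, fd z = deriv f z / deriv g z)
    (hfdd : ∀ z, fdd z = deriv fd z / deriv g z)
    (hF : ∀ z, F z = f z + fd z / (h z - fdd z / (2 * fd z))) :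
    ∀ z ∈ U, c * z + d ≠ 0 → deriv g z ≠ 0 → deriv g (γ z) ≠ 0 →
      fd z ≠ 0 → fd (γ z) ≠ 0 →
      h z - fdd z / (2 * fd z) ≠ 0 → h (γ z) - fdd (γ z) / (2 * fd (γ z)) ≠ 0 →
      ch * F z + dh ≠ 0 →
      F (γ z) = (ah * F z + bh) / (ch * F z + dh) := by
  intro z hzU hcz hg'z hg'γz hfdz _ hDz _ hFden
  set V := U ∩ {w | c * w + d ≠ 0}
  have hV : IsOpen V := hU.inter (isOpen_ne_fun (by fun_prop) continuous_const)
  have hzV : z ∈ V := ⟨hzU, hcz⟩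
  have hγ' : ∀ w ∈ V, HasDerivAt γ (1 / (c * w + d) ^ 2) w := fun w hw => by
    rw [hγ, ← hdet]
    exact hasDerivAt_moebius a b c d w hw.2
  have hγ'ne : ∀ w ∈ V, 1 / (c * w + d) ^ 2 ≠ 0 := fun w hw =>
    one_div_ne_zero (pow_ne_zero 2 hw.2)
  have hγU : ∀ w ∈ V, γ w ∈ U := fun w hw => hmaps w hw.1 hw.2
  have hginv : ∀ w ∈ V, g ∘ γ =ᶠ[𝓝 w] g := fun w hw =>
    (hV.eventually_mem hw).mono fun x hx => hgi x hx.1 hx.2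
  have hfdγ : ∀ w ∈ V, fd (γ w) = fd w / (ch * f w + dh) ^ 2 := fun w hw => by
    have hfeq : f ∘ γ =ᶠ[𝓝 w] fun x => (ah * f x + bh) / (ch * f x + dh) :=
      (hV.eventually_mem hw).mono fun x hx => by
        simp only [Function.comp_apply, hfe x hx.1 hx.2, hρ]
    rw [hfd, hfd]
    exact deriv_div_deriv_comp_of_moebius_equivariant hdet' (hf w hw.1).differentiableAt
      (hf _ (hγU w hw)).differentiableAt (hg _ (hγU w hw)).differentiableAt (hγ' w hw)
      (hγ'ne w hw) (hfden w hw.1 hw.2) hfeq (hginv w hw)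
  have hfd_diff : ∀ w ∈ U, deriv g w ≠ 0 → DifferentiableAt ℂ fd w := fun w hw hne => by
    rw [funext hfd]
    exact ((hf.deriv w hw).div (hg.deriv w hw) hne).differentiableAt
  have hfddγ : fdd (γ z) = fdd z / (ch * f z + dh) ^ 2
      - 2 * ch * fd z ^ 2 / (ch * f z + dh) ^ 3 := by
    have hfdeq : fd ∘ γ =ᶠ[𝓝 z] fun x => fd x / (ch * f x + dh) ^ 2 :=
      (hV.eventually_mem hzV).mono hfdγ
    rw [hfdd, hfdd, deriv_div_deriv_comp_of_eventuallyEq_div_sq (hfd_diff z hzU hg'z)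
      (hfd_diff _ (hγU z hzV) hg'γz) (hf z hzU).differentiableAt
      (hg _ (hγU z hzV)).differentiableAt (hγ' z hzV) (hγ'ne z hzV) (hfden z hzU hcz) hfdeq
      (hginv z hzV), ← hfd]
    ring
  have hJ := hfden z hzU hcz
  have hDγ : h (γ z) - fdd (γ z) / (2 * fd (γ z)) =
      h z - fdd z / (2 * fd z) + ch * fd z / (ch * f z + dh) := by
    rw [hhi z hzU hcz, hfdγ z hzV, hfddγ]
    field_simp
    ring
  have hfγ : f (γ z) = (ah * f z + bh) / (ch * f z + dh) := by rw [hfe z hzU hcz, hρ]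
  rw [hF z] at hFden
  rw [hF (γ z), hDγ, hfdγ z hzV, hfγ, hF z]
  exact (moebius_add_div hdet' hJ hDz hFden).symm
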